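/- Let p be a prime and let S, T be finite types. Precomposition, sending a function u : T → S to the ring homomorphism (S → ZMod p) →+* (T → ZMod p) given by g ↦ g ∘ u, is a bijection from the set of functions T → S onto the set of ring homomorphisms (S → ZMod p) →+* (T → ZMod p). -/

import Mathlib

/-!
A ring homomorphism `φ : (S → ZMod p) →+* ZMod p` has a prime kernel, and every prime of the
finite product `S → ZMod p` is pulled back along some evaluation `g ↦ g s`. Then `φ` kills
`g - const (g s)`, so `φ` is evaluation at `s` followed by the unique ring endomorphism of
`ZMod p`. Hence evaluation is a bijection from `S` onto `(S → ZMod p) →+* ZMod p`, and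
ring homomorphisms into `T → ZMod p` are exactly the `T`-indexed families of these.
-/

def RingHom.piEquiv {ι γ : Type*} {f : ι → Type*} [∀ i, NonAssocSemiring (f i)]
    [NonAssocSemiring γ] : (∀ i, γ →+* f i) ≃ (γ →+* ∀ i, f i) where
  toFun := RingHom.pi
  invFun φ i := (Pi.evalRingHom f i).comp φ
  left_inv _ := rfl
  right_inv _ := rfl

theorem RingHom.exists_eq_comp_evalRingHom {ι R K : Type*} [_root_.Finite ι] [CommRing R]
    [CommRing K] [IsDomain K] (φ : (ι → R) →+* K) :
    ∃ i, φ = (φ.comp (Pi.constRingHom ι R)).comp (Pi.evalRingHom (fun _ => R) i) := by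
  obtain ⟨i, q, hq⟩ := PrimeSpectrum.exists_comap_evalRingHom_eq ⟨ker φ, ker_isPrime φ⟩
  have hker : ker (Pi.evalRingHom (fun _ => R) i) ≤ ker φ := fun g hg => by
    have : g ∈ (PrimeSpectrum.comap (Pi.evalRingHom _ i) q).asIdeal := by
      simp [mem_ker.mp hg]
    rwa [hq] at this
  refine ⟨i, RingHom.ext fun g => ?_⟩
  have hg : g - Pi.constRingHom ι R (g i) ∈ ker φ := hker (by simp [mem_ker])
  rwa [mem_ker, map_sub, sub_eq_zero] at hg

theorem Pi.evalRingHom_injective (S R : Type*) [NonAssocSemiring R] [Nontrivial R] :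
    Function.Injective (Pi.evalRingHom (fun _ : S => R)) := by
  classical
  intro s s' h
  by_contra hne
  have := congrArg (fun φ : (S → R) →+* R => φ (Pi.single s 1)) h
  simp [Pi.single_eq_of_ne' hne] at this

theorem ZMod.evalRingHom_bijective (p : ℕ) [Fact p.Prime] (S : Type*) [Finite S] :
    Function.Bijective (Pi.evalRingHom (fun _ : S => ZMod p)) := by
  refine ⟨Pi.evalRingHom_injective S (ZMod p), fun φ => ?_⟩
  obtain ⟨s, hs⟩ := φ.exists_eq_comp_evalRingHom
  refine ⟨s, ?_⟩
  rw [hs, RingHom.ext_zmod (φ.comp (Pi.constRingHom S (ZMod p))) (RingHom.id _),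
    RingHom.id_comp]

theorem precomp_bijective_general (p : ℕ) (hp : p.Prime) (S T : Type*) [Finite S] :
    Function.Bijective
      (fun u : T → S =>
        (Pi.ringHom (fun t : T => Pi.evalRingHom (fun _ : S => ZMod p) (u t)) :
          (S → ZMod p) →+* (T → ZMod p))) := by
  have : Fact p.Prime := ⟨hp⟩
  exact RingHom.piEquiv.bijective.comp (ZMod.evalRingHom_bijective p S).comp_left

/-- For a prime `p` and finite types `S`, `T`, precomposition `u ↦ (g ↦ g ∘ u)` is a
bijection from the functions `T → S` onto the ring homomorphisms
`(S → ZMod p) →+* (T → ZMod p)`. -/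
theorem precomp_bijective (p : ℕ) (hp : p.Prime) (S T : Type*) [Finite S] [Finite T] :
    Function.Bijective
      (fun u : T → S =>
        (Pi.ringHom (fun t : T => Pi.evalRingHom (fun _ : S => ZMod p) (u t)) :
          (S → ZMod p) →+* (T → ZMod p))) :=
  precomp_bijective_general p hp S T
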